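/- arXiv:2402.01072 — 2 statements merged into one kernel-verified Lean document; each statement's English description precedes it below -/
import Mathlib

section
/- Let G be a finite group, N ⊴ G, and H ≤ G with gcd(|N|,|H|) = 1. If H is weakly SΦ-supplemented in G, then NH/N is weakly SΦ-supplemented in G/N. -/
open scoped Pointwise

/-- A subgroup `A` is S-permutable in `G` if it permutes with every Sylow subgroup of `G`. -/
def IsSPermutable {G : Type*} [Group G] (A : Subgroup G) : Prop :=
  ∀ (p : ℕ), p.Prime → ∀ Q : Sylow p G,
    (A : Set G) * ((Q : Subgroup G) : Set G) = ((Q : Subgroup G) : Set G) * (A : Set G)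

/-- `A_{sG}`: the subgroup generated by all subgroups of `A` that are S-permutable in `G`. -/
def sCore {G : Type*} [Group G] (A : Subgroup G) : Subgroup G :=
  ⨆ B ∈ {B : Subgroup G | B ≤ A ∧ IsSPermutable B}, B

/-- `A` is weakly SΦ-supplemented in `G` if there is `T ≤ G` with `G = AT` and
`A ∩ T ≤ Φ(A) · A_{sG}`. -/
def WeaklySPhiSupplemented {G : Type*} [Group G] (A : Subgroup G) : Prop :=
  ∃ T : Subgroup G, (A : Set G) * (T : Set G) = Set.univ ∧
    A ⊓ T ≤ (frattini A).map A.subtype ⊔ sCore A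

/-- `G` is `p`-nilpotent: it has a normal `p`-complement. -/
def IsPNilpotent (p : ℕ) (G : Type*) [Group G] : Prop :=
  ∃ H : Subgroup G, H.Normal ∧ (∃ n : ℕ, H.index = p ^ n) ∧ ¬ p ∣ Nat.card H

/-- A group is supersolvable if it has a normal series with cyclic factors. -/
def IsSupersolvable (G : Type*) [Group G] : Prop :=
  ∃ (n : ℕ) (s : Fin (n + 1) → Subgroup G),
    s 0 = ⊥ ∧ s (Fin.last n) = ⊤ ∧ Monotone s ∧ (∀ i, (s i).Normal) ∧
    ∀ i : Fin n, ∃ x : G, s i.succ ≤ s i.castSucc ⊔ Subgroup.zpowers x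

/-- `H/K` is a chief factor of `G`. -/
def IsChiefFactor {G : Type*} [Group G] (K H : Subgroup G) : Prop :=
  K.Normal ∧ H.Normal ∧ K < H ∧
    ∀ L : Subgroup G, L.Normal → K ≤ L → L ≤ H → L = K ∨ L = H

/-- A quasisimple group: perfect, and simple modulo its center. -/
def IsQuasisimple (G : Type*) [Group G] : Prop :=
  commutator G = ⊤ ∧ IsSimpleGroup (G ⧸ Subgroup.center G)

/-- A subgroup is subnormal if there is an ascending chain of successively normal
subgroups reaching `⊤`. -/
def IsSubnormalSubgroup {G : Type*} [Group G] (H : Subgroup G) : Prop :=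
  ∃ (n : ℕ) (s : Fin (n + 1) → Subgroup G), s 0 = H ∧ s (Fin.last n) = ⊤ ∧
    ∀ i : Fin n, s i.castSucc ≤ s i.succ ∧ ((s i.castSucc).subgroupOf (s i.succ)).Normal

/-- The layer `E(G)`: the subgroup generated by all components of `G`. -/
def layer (G : Type*) [Group G] : Subgroup G :=
  ⨆ C ∈ {C : Subgroup G | IsSubnormalSubgroup C ∧ IsQuasisimple C}, C

/-- The Fitting subgroup `F(G)`: generated by all nilpotent normal subgroups. -/
def fittingSubgroup (G : Type*) [Group G] : Subgroup G :=
  ⨆ H ∈ {H : Subgroup G | H.Normal ∧ Group.IsNilpotent H}, H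

/-- The generalized Fitting subgroup `F*(G) = E(G) F(G)`. -/
def genFitting (G : Type*) [Group G] : Subgroup G :=
  layer G ⊔ fittingSubgroup G

/-!
Let `G = HT` witness that `H` is weakly SΦ-supplemented. Since `|NT : T|` divides both `|N|`
and `|G : T| = |H : H ∩ T|`, coprimality forces `N ≤ T`. Then `T/N` supplements `NH/N = HN/N`
in `G/N`, the intersection `HN/N ∩ T/N` is the image of `H ∩ T` because `N ≤ T`, and
surjective homomorphisms carry Frattini subgroups and S-permutable subgroups into their
counterparts in the image.
-/

namespace Subgroup

variable {G : Type*} [Group G]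

/-- If `t ⊆ sT`, the cosets of `T` meeting `t` already meet `s`. -/
theorem relIndex_eq_relIndex_of_le_of_subset_mul (T : Subgroup G) {s t : Subgroup G}
    (hst : s ≤ t) (hc : (t : Set G) ⊆ (s : Set G) * (T : Set G)) :
    T.relIndex s = T.relIndex t := by
  refine Nat.card_congr (Equiv.ofBijective (quotientSubgroupOfEmbeddingOfLE T hst)
    ⟨(quotientSubgroupOfEmbeddingOfLE T hst).injective, fun x ↦ x.inductionOn' ?_⟩)
  rintro ⟨_, hy⟩
  obtain ⟨a, ha, b, hb, rfl⟩ := hc hy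
  refine ⟨QuotientGroup.mk ⟨a, ha⟩, ?_⟩
  rw [quotientSubgroupOfEmbeddingOfLE_apply_mk]
  exact Quotient.sound' <| QuotientGroup.leftRel_apply.mpr (by simpa [mem_subgroupOf] using hb)

theorem index_eq_relIndex_of_mul_eq_univ {H T : Subgroup G}
    (hHT : (H : Set G) * (T : Set G) = Set.univ) : T.index = T.relIndex H := by
  rw [← relIndex_top_right]
  exact (relIndex_eq_relIndex_of_le_of_subset_mul T le_top (by simp [hHT])).symm

theorem le_of_coprime_of_mul_eq_univ {N H T : Subgroup G} [N.Normal]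
    (hcop : (Nat.card N).Coprime (Nat.card H)) (hHT : (H : Set G) * (T : Set G) = Set.univ) :
    N ≤ T := by
  have hdvd : T.relIndex N ∣ Nat.card H := calc
    T.relIndex N = T.relIndex (N ⊔ T) :=
      relIndex_eq_relIndex_of_le_of_subset_mul T le_sup_left (normal_mul N T).le
    _ ∣ T.index := relIndex_dvd_index_of_le le_sup_right
    _ = T.relIndex H := index_eq_relIndex_of_mul_eq_univ hHT
    _ ∣ Nat.card H := relIndex_dvd_card _ _
  exact relIndex_eq_one.mp <| (hcop.coprime_dvd_left (relIndex_dvd_card _ _)).eq_one_of_dvd hdvd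

variable {G' : Type*} [Group G'] {f : G →* G'}

theorem map_inf_map_le_of_ker_le {H T : Subgroup G} (hker : f.ker ≤ T) :
    H.map f ⊓ T.map f ≤ (H ⊓ T).map f := by
  rintro _ ⟨⟨a, ha, rfl⟩, hT⟩
  have haT : a ∈ T := by
    rw [← sup_eq_left.mpr hker, ← comap_map_eq]
    exact hT
  exact ⟨a, ⟨ha, haT⟩, rfl⟩

theorem map_map_subtype_frattini_le (H : Subgroup G) :
    ((frattini H).map H.subtype).map f ≤ (frattini (H.map f)).map (H.map f).subtype := by
  rintro _ ⟨_, ⟨z, hz, rfl⟩, rfl⟩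
  exact ⟨f.subgroupMap H z,
    frattini_le_comap_frattini_of_surjective (f.subgroupMap_surjective H) hz, rfl⟩

end Subgroup

section

variable {G G' : Type*} [Group G] [Group G'] {f : G →* G'}

theorem IsSPermutable.map [Finite G] (hf : Function.Surjective f) {B : Subgroup G}
    (hB : IsSPermutable B) : IsSPermutable (B.map f) := by
  intro p hp Q'
  have := Fact.mk hp
  obtain ⟨P, rfl⟩ := Sylow.mapSurjective_surjective hf p Q'
  rw [Sylow.coe_mapSurjective, Subgroup.coe_map, Subgroup.coe_map, ← Set.image_mul,
    ← Set.image_mul, hB p hp P]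

theorem map_sCore_le [Finite G] (hf : Function.Surjective f) (H : Subgroup G) :
    (sCore H).map f ≤ sCore (H.map f) := by
  rw [Subgroup.map_le_iff_le_comap, sCore]
  refine iSup₂_le fun B ⟨hBH, hB⟩ ↦ Subgroup.map_le_iff_le_comap.mp ?_
  exact le_iSup₂_of_le (B.map f) ⟨Subgroup.map_mono hBH, hB.map hf⟩ le_rfl

theorem WeaklySPhiSupplemented.map_of_ker_le [Finite G] (hf : Function.Surjective f)
    {H T : Subgroup G} (hHT : (H : Set G) * (T : Set G) = Set.univ)
    (hHT_le : H ⊓ T ≤ (frattini H).map H.subtype ⊔ sCore H) (hker : f.ker ≤ T) :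
    WeaklySPhiSupplemented (H.map f) := by
  refine ⟨T.map f, ?_, ?_⟩
  · rw [Subgroup.coe_map, Subgroup.coe_map, ← Set.image_mul, hHT, Set.image_univ, hf.range_eq]
  · calc H.map f ⊓ T.map f ≤ (H ⊓ T).map f := Subgroup.map_inf_map_le_of_ker_le hker
      _ ≤ ((frattini H).map H.subtype ⊔ sCore H).map f := Subgroup.map_mono hHT_le
      _ = ((frattini H).map H.subtype).map f ⊔ (sCore H).map f := Subgroup.map_sup _ _ _
      _ ≤ _ := sup_le_sup (Subgroup.map_map_subtype_frattini_le H) (map_sCore_le hf H)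

end

theorem stmt2 {G : Type*} [Group G] [Finite G] (N H : Subgroup G) [N.Normal]
    (hcop : Nat.Coprime (Nat.card N) (Nat.card H)) (h : WeaklySPhiSupplemented H) :
    WeaklySPhiSupplemented ((N ⊔ H).map (QuotientGroup.mk' N)) := by
  obtain ⟨T, hHT, hHT_le⟩ := h
  have hNT : N ≤ T := Subgroup.le_of_coprime_of_mul_eq_univ hcop hHT
  rw [Subgroup.map_sup, QuotientGroup.map_mk'_self, bot_sup_eq]
  exact .map_of_ker_le (QuotientGroup.mk'_surjective N) hHT hHT_le
    ((QuotientGroup.ker_mk' N).trans_le hNT)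
end

section
/- Let G be a finite group and N a normal subgroup of G. Then F*(N) = N ∩ F*(G), where F* denotes the generalized Fitting subgroup. -/
open scoped Pointwise

/-!
A component `C` of `G` not contained in the normal subgroup `N` centralizes `N`. Along a subnormal
series `C = C₀ ⊴ C₁ ⊴ ⋯ ⊴ Cₙ = G`, every `L ≤ Cⱼ` normalized by `Cⱼ` and not containing `C`
centralizes `C`: for `j = 0` because `L` is a proper normal subgroup of a quasisimple group, and
for `j + 1` because `⁅C, L⁆ ≤ L ∩ Cⱼ`, which centralizes `C`, so the three subgroups lemma and
`⁅C, C⁆ = C` give `⁅C, L⁆ = 1`. Hence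
`E(G) ≤ E(N) · C_G(N)` and, by Dedekind's law, `N ∩ F*(G) ≤ E(N) · (N ∩ C_G(N) F(G))`. The last
factor is normal in `G` and nilpotent, since commutators of subgroups of `N` with it can be
computed with `F(G)` instead; so it lies in `F(N)`. Conversely, components of `N` are components
of `G`, and `F(N)` is characteristic in `N` and nilpotent by Fitting's theorem, so it lies in
`F(G)`.
-/

open Subgroup
open scoped commutatorElement

section

variable {G : Type*} [Group G]

theorem isSubnormalSubgroup_iff_isSubnormal {H : Subgroup G} :
    IsSubnormalSubgroup H ↔ H.IsSubnormal := by
  rw [IsSubnormal.isSubnormal_iff]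
  constructor
  · rintro ⟨n, s, h0, hn, hs⟩
    set f : ℕ → Subgroup G := fun k => s ⟨min k n, by omega⟩ with hf
    have hfs : ∀ i : Fin (n + 1), f i = s i := fun i =>
      congrArg s (Fin.ext (min_eq_left (Nat.lt_succ_iff.mp i.2)))
    have hstep : ∀ k, f k ≤ f (k + 1) ∧ ((f k).subgroupOf (f (k + 1))).Normal := by
      intro k
      rcases lt_or_ge k n with hk | hk
      · have := hs ⟨k, hk⟩
        rwa [← hfs, ← hfs] at this
      · have htop : ∀ m, n ≤ m → f m = ⊤ := fun m hm =>
          (congrArg s (Fin.ext (min_eq_right hm))).trans hn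
        rw [htop k hk, htop (k + 1) (by omega)]
        exact ⟨le_rfl, normal_subgroupOf⟩
    exact ⟨n, f, monotone_nat_of_le_succ fun k => (hstep k).1, fun k => (hstep k).2,
      (hfs 0).trans h0, (hfs (Fin.last n)).trans hn⟩
  · rintro ⟨n, f, hmono, hnormal, h0, hn⟩
    exact ⟨n, fun i => f i, h0, hn, fun i => ⟨hmono (Nat.le_succ i), hnormal i⟩⟩

theorem map_center_of_mulEquiv {H : Type*} [Group H] (e : G ≃* H) :
    (center G).map e.toMonoidHom = center H := by
  ext x
  rw [mem_map_equiv, ← SetLike.mem_coe, coe_center, ← SetLike.mem_coe, coe_center,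
    MulEquivClass.apply_mem_center_iff]

theorem IsQuasisimple.of_mulEquiv {H : Type*} [Group H] (e : G ≃* H) (hG : IsQuasisimple G) :
    IsQuasisimple H := by
  obtain ⟨hperf, hsimple⟩ := hG
  have hrange : e.toMonoidHom.range = ⊤ := MonoidHom.range_eq_top.mpr e.surjective
  refine ⟨?_, ?_⟩
  · rw [← map_top_of_surjective e.toMonoidHom e.surjective, ← hperf, map_commutator_eq, hrange,
      commutator_def]
  · have e' := QuotientGroup.congr _ _ e (map_center_of_mulEquiv e)
    exact e'.symm.isSimpleGroup

theorem IsQuasisimple.le_center {K : Subgroup G} [K.Normal] (hG : IsQuasisimple G) (hK : K ≠ ⊤) :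
    K ≤ center G := by
  obtain ⟨hperf, hsimple⟩ := hG
  rcases (Normal.map ‹K.Normal› (QuotientGroup.mk' (center G))
    (QuotientGroup.mk'_surjective _)).eq_bot_or_eq_top with hbot | htop
  · rwa [Subgroup.map_eq_bot_iff, QuotientGroup.ker_mk'] at hbot
  · refine absurd ?_ hK
    have hsup : K ⊔ center G = ⊤ := by
      rw [← QuotientGroup.ker_mk' (center G), ← comap_map_eq, htop, comap_top]
    rw [eq_top_iff, ← hperf]
    exact Normal.commutator_le_of_self_sup_commutative_eq_top hsup inferInstance

theorem IsQuasisimple.commutator_self_eq {C : Subgroup G} (hC : IsQuasisimple C) : ⁅C, C⁆ = C := by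
  rw [← map_subtype_commutator, hC.1, ← MonoidHom.range_eq_map, range_subtype]

theorem commutator_eq_bot_of_commutator_commutator_eq_bot {C L : Subgroup G} (hC : ⁅C, C⁆ = C)
    (h : ⁅⁅C, L⁆, C⁆ = ⊥) : ⁅C, L⁆ = ⊥ := by
  have := commutator_commutator_eq_bot_of_rotate h (by rwa [commutator_comm L C])
  rwa [hC] at this

theorem IsQuasisimple.commutator_eq_bot_of_lt {C L : Subgroup G} (hC : IsQuasisimple C)
    (hLC : L < C) (hnorm : C ≤ normalizer (L : Set G)) : ⁅C, L⁆ = ⊥ := by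
  have : (L.subgroupOf C).Normal := (normal_subgroupOf_iff_le_normalizer hLC.le).mpr hnorm
  have hcen := hC.le_center (K := L.subgroupOf C) (mt subgroupOf_eq_top.mp (not_le_of_gt hLC))
  rw [commutator_eq_bot_iff_le_centralizer]
  intro c hc
  rw [mem_centralizer_iff]
  intro l hl
  have := mem_center_iff.mp (hcen (show (⟨l, hLC.le hl⟩ : C) ∈ L.subgroupOf C from hl)) ⟨c, hc⟩
  exact (congrArg Subtype.val this).symm

theorem commutator_eq_bot_of_isSubnormal_of_not_le {C N : Subgroup G} (hC : C.IsSubnormal)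
    (hq : IsQuasisimple C) (hN : N.Normal) (hCN : ¬ C ≤ N) : ⁅C, N⁆ = ⊥ := by
  obtain ⟨n, f, hmono, hnormal, h0, hn⟩ := IsSubnormal.isSubnormal_iff.mp hC
  suffices key : ∀ j, ∀ L : Subgroup G, L ≤ f j → f j ≤ normalizer (L : Set G) → ¬ C ≤ L →
      ⁅C, L⁆ = ⊥ from
    key n N (hn ▸ le_top) (hn ▸ (normalizer_eq_top_iff.mpr hN).ge) hCN
  intro j
  induction j with
  | zero =>
    intro L hL hnorm hCL
    rw [h0] at hL hnorm
    exact hq.commutator_eq_bot_of_lt (lt_of_le_not_ge hL hCL) hnorm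
  | succ j ih =>
    intro L hL hnorm hCL
    have hCj : C ≤ f j := h0 ▸ hmono (Nat.zero_le j)
    have hj : f j ≤ f (j + 1) := hmono (Nat.le_succ j)
    have hjnorm : f (j + 1) ≤ normalizer (f j : Set G) :=
      (normal_subgroupOf_iff_le_normalizer hj).mp (hnormal j)
    have hbot : ⁅C, L ⊓ f j⁆ = ⊥ :=
      ih (L ⊓ f j) inf_le_right (le_trans (le_inf (hj.trans hnorm) le_normalizer)
        inf_normalizer_le_normalizer_inf) fun h => hCL (h.trans inf_le_left)
    have hle : ⁅C, L⁆ ≤ L ⊓ f j :=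
      le_inf (le_normalizer_iff_commutator_le_right.mp ((hCj.trans hj).trans hnorm))
        ((commutator_mono hCj le_rfl).trans
          (le_normalizer_iff_commutator_le_left.mp (hL.trans hjnorm)))
    refine commutator_eq_bot_of_commutator_commutator_eq_bot hq.commutator_self_eq ?_
    rw [commutator_comm, ← le_bot_iff, ← hbot]
    exact commutator_mono le_rfl hle

theorem commutator_le_iff_le_comap_centralizer {X Y R : Subgroup G} [R.Normal] :
    ⁅X, Y⁆ ≤ R ↔
      X ≤ (centralizer (Y.map (QuotientGroup.mk' R) : Set (G ⧸ R))).comap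
        (QuotientGroup.mk' R) := by
  rw [← map_le_iff_le_comap, ← commutator_eq_bot_iff_le_centralizer, ← map_commutator,
    Subgroup.map_eq_bot_iff, QuotientGroup.ker_mk']

/-- Index `i` measures commutator weight in `H`: `lowerCentralSeriesFromTop H (i + 1)` is
`H.lowerCentralSeries i`, and weight `0` imposes no condition. -/
def lowerCentralSeriesFromTop (H : Subgroup G) : ℕ → Subgroup G
  | 0 => ⊤
  | n + 1 => H.lowerCentralSeries n

namespace lowerCentralSeriesFromTop

variable {H : Subgroup G}

instance normal [H.Normal] (n : ℕ) : (lowerCentralSeriesFromTop H n).Normal := by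
  cases n
  · exact normal_top
  · exact lowerCentralSeries_normal H _

theorem commutator_le_succ [H.Normal] (n : ℕ) :
    ⁅lowerCentralSeriesFromTop H n, H⁆ ≤ lowerCentralSeriesFromTop H (n + 1) := by
  cases n
  · exact commutator_le_right ⊤ H
  · exact le_rfl

theorem eq_bot {a n : ℕ} (ha : H.lowerCentralSeries a = ⊥) (hn : a < n) :
    lowerCentralSeriesFromTop H n = ⊥ := by
  obtain ⟨m, rfl⟩ := Nat.exists_eq_add_of_lt hn
  exact le_bot_iff.mp (ha ▸ H.lowerCentralSeries_antitone (by omega))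

end lowerCentralSeriesFromTop

theorem iSup_commutator_le {ι : Sort*} {X : ι → Subgroup G} {Y R : Subgroup G} [R.Normal]
    (h : ∀ i, ⁅X i, Y⁆ ≤ R) : ⁅⨆ i, X i, Y⁆ ≤ R :=
  commutator_le_iff_le_comap_centralizer.mpr
    (iSup_le fun i => commutator_le_iff_le_comap_centralizer.mp (h i))

theorem sup_commutator_le {X X' Y R : Subgroup G} [R.Normal] (h : ⁅X, Y⁆ ≤ R)
    (h' : ⁅X', Y⁆ ≤ R) : ⁅X ⊔ X', Y⁆ ≤ R :=
  commutator_le_iff_le_comap_centralizer.mpr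
    (sup_le (commutator_le_iff_le_comap_centralizer.mp h)
      (commutator_le_iff_le_comap_centralizer.mp h'))

open Finset lowerCentralSeriesFromTop in
theorem lowerCentralSeries_sup_le (H K : Subgroup G) [H.Normal] [K.Normal] (n : ℕ) :
    (H ⊔ K).lowerCentralSeries n ≤ ⨆ p ∈ antidiagonal (n + 1),
      lowerCentralSeriesFromTop H p.1 ⊓ lowerCentralSeriesFromTop K p.2 := by
  induction n with
  | zero =>
    refine sup_le ?_ ?_
    · exact le_iSup₂_of_le (1, 0) (by simp) (by simp [lowerCentralSeriesFromTop])
    · exact le_iSup₂_of_le (0, 1) (by simp) (by simp [lowerCentralSeriesFromTop])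
  | succ n ih =>
    refine (commutator_mono ih le_rfl).trans ?_
    rw [commutator_comm]
    refine sup_commutator_le ?_ ?_ <;> rw [commutator_comm] <;>
      refine iSup_commutator_le fun p => iSup_commutator_le fun hp => ?_
    · refine le_iSup₂_of_le (p.1 + 1, p.2) (by rw [HasAntidiagonal.mem_antidiagonal] at hp ⊢; omega) ?_
      exact le_inf ((commutator_mono inf_le_left le_rfl).trans (commutator_le_succ p.1))
        ((commutator_mono inf_le_right le_rfl).trans (commutator_le_left _ _))
    · refine le_iSup₂_of_le (p.1, p.2 + 1) (by rw [HasAntidiagonal.mem_antidiagonal] at hp ⊢; omega) ?_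
      exact le_inf ((commutator_mono inf_le_left le_rfl).trans (commutator_le_left _ _))
        ((commutator_mono inf_le_right le_rfl).trans (commutator_le_succ p.2))

theorem isNilpotent_sup {H K : Subgroup G} [H.Normal] [K.Normal] [Group.IsNilpotent H]
    [Group.IsNilpotent K] : Group.IsNilpotent (H ⊔ K : Subgroup G) := by
  obtain ⟨a, ha⟩ := (isNilpotent_iff_lowerCentralSeries H).mp inferInstance
  obtain ⟨b, hb⟩ := (isNilpotent_iff_lowerCentralSeries K).mp inferInstance
  refine (isNilpotent_iff_lowerCentralSeries _).mpr ⟨a + b, le_bot_iff.mp ?_⟩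
  refine (lowerCentralSeries_sup_le H K (a + b)).trans (iSup₂_le fun p hp => ?_)
  rw [Finset.HasAntidiagonal.mem_antidiagonal] at hp
  rcases lt_or_ge a p.1 with h | h
  · exact inf_le_left.trans (lowerCentralSeriesFromTop.eq_bot ha h).le
  · exact inf_le_right.trans (lowerCentralSeriesFromTop.eq_bot hb (by omega)).le

theorem le_fittingSubgroup {H : Subgroup G} (hH : H.Normal) (hnil : Group.IsNilpotent H) :
    H ≤ fittingSubgroup G :=
  le_iSup₂_of_le H ⟨hH, hnil⟩ le_rfl

theorem fittingSubgroup_normal : (fittingSubgroup G).Normal :=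
  biSup_normal _ _ fun _ hH => hH.1

theorem isNilpotent_fittingSubgroup [Finite G] : Group.IsNilpotent (fittingSubgroup G) := by
  have hclosed : SupClosed {H : Subgroup G | H.Normal ∧ Group.IsNilpotent H} :=
    fun H ⟨hH, hHnil⟩ K ⟨hK, hKnil⟩ => ⟨sup_normal H K, isNilpotent_sup⟩
  exact (hclosed.biSup_mem (Set.toFinite _) ⟨normal_bot, inferInstance⟩ fun _ hH => hH).2

theorem fittingSubgroup_characteristic : (fittingSubgroup G).Characteristic :=
  characteristic_iff_map_le.mpr fun ϕ => map_le_iff_le_comap.mpr <|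
    iSup₂_le fun H ⟨hH, hnil⟩ => map_le_iff_le_comap.mp <|
      le_fittingSubgroup (hH.map _ ϕ.surjective)
        ((Group.isNilpotent_congr (H.equivMapOfInjective _ ϕ.injective)).mp hnil)

theorem map_subtype_fittingSubgroup_le [Finite G] (N : Subgroup G) [N.Normal] :
    (fittingSubgroup N).map N.subtype ≤ fittingSubgroup G :=
  haveI := fittingSubgroup_characteristic (G := N)
  le_fittingSubgroup inferInstance
    ((Group.isNilpotent_congr (equivMapOfInjective _ _ N.subtype_injective)).mp
      isNilpotent_fittingSubgroup)

theorem le_map_subtype_fittingSubgroup {N M : Subgroup G} (hMN : M ≤ N)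
    (hM : (M.subgroupOf N).Normal) (hnil : Group.IsNilpotent M) :
    M ≤ (fittingSubgroup N).map N.subtype := by
  rw [← map_subgroupOf_eq_of_le hMN]
  exact map_mono (le_fittingSubgroup hM
    ((Group.isNilpotent_congr (subgroupOfEquivOfLe hMN)).mpr hnil))

theorem commutator_le_commutator_of_le_centralizer_sup {N F A M : Subgroup G} [N.Normal]
    [F.Normal] (hA : A ≤ N) (hM : M ≤ centralizer N ⊔ F) : ⁅A, M⁆ ≤ ⁅A, F⁆ := by
  rw [commutator_le]
  intro a ha m hm
  have hm' : m ∈ ((centralizer N ⊔ F : Subgroup G) : Set G) := hM hm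
  rw [mul_normal] at hm'
  obtain ⟨z, hz, f, hf, rfl⟩ := hm'
  have haf : ⁅a, f⁆ ∈ N := commutator_le_left N F (commutator_mem_commutator (hA ha) hf)
  rw [commutatorElement_mul_right_eq_mul_conj,
    (commutatorElement_eq_one_iff_mul_comm).mpr (mem_centralizer_iff.mp hz a (hA ha)),
    one_mul, ← mem_centralizer_iff.mp hz _ haf, mul_inv_cancel_right]
  exact commutator_mem_commutator ha hf

theorem isNilpotent_of_le_centralizer_sup {N F M : Subgroup G} [N.Normal] [F.Normal]
    [Group.IsNilpotent F] (hMN : M ≤ N) (hM : M ≤ centralizer N ⊔ F) : Group.IsNilpotent M := by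
  obtain ⟨c, hc⟩ := (isNilpotent_iff_lowerCentralSeries F).mp inferInstance
  have key : ∀ k, M.lowerCentralSeries (k + 1) ≤ F.lowerCentralSeries k := by
    intro k
    rw [Subgroup.lowerCentralSeries_succ]
    induction k with
    | zero =>
      exact (commutator_le_commutator_of_le_centralizer_sup hMN hM).trans
        (commutator_le_right M F)
    | succ k ih =>
      exact (commutator_le_commutator_of_le_centralizer_sup
        ((M.lowerCentralSeries_le_self _).trans hMN) hM).trans (commutator_mono ih le_rfl)
  exact isNilpotent_of_lowerCentralSeries_eq_bot (le_bot_iff.mp (hc ▸ key c))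

theorem le_layer {C : Subgroup G} (hC : C.IsSubnormal) (hq : IsQuasisimple C) : C ≤ layer G :=
  le_iSup₂_of_le C ⟨isSubnormalSubgroup_iff_isSubnormal.mpr hC, hq⟩ le_rfl

theorem map_subtype_layer_le {N : Subgroup G} (hN : N.IsSubnormal) :
    (layer N).map N.subtype ≤ layer G :=
  map_le_iff_le_comap.mpr <| iSup₂_le fun C ⟨hC, hq⟩ => map_le_iff_le_comap.mp <|
    le_layer ((isSubnormalSubgroup_iff_isSubnormal.mp hC).trans' hN)
      (hq.of_mulEquiv (C.equivMapOfInjective _ N.subtype_injective))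

theorem le_map_subtype_layer {N C : Subgroup G} (hCN : C ≤ N) (hC : C.IsSubnormal)
    (hq : IsQuasisimple C) : C ≤ (layer N).map N.subtype := by
  rw [← map_subgroupOf_eq_of_le hCN]
  exact map_mono (le_layer hC.subgroupOf (hq.of_mulEquiv (subgroupOfEquivOfLe hCN).symm))

theorem layer_le_sup_centralizer {N : Subgroup G} (hN : N.Normal) :
    layer G ≤ (layer N).map N.subtype ⊔ centralizer N :=
  iSup₂_le fun C ⟨hC, hq⟩ => by
    rw [isSubnormalSubgroup_iff_isSubnormal] at hC
    by_cases hCN : C ≤ N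
    · exact le_sup_of_le_left (le_map_subtype_layer hCN hC hq)
    · exact le_sup_of_le_right (commutator_eq_bot_iff_le_centralizer.mp
        (commutator_eq_bot_of_isSubnormal_of_not_le hC hq hN hCN))

theorem inf_sup_le_sup_inf_of_normal {A N W : Subgroup G} [W.Normal] (hA : A ≤ N) :
    N ⊓ (A ⊔ W) ≤ A ⊔ (N ⊓ W) := by
  intro x hx
  obtain ⟨hxN, hx⟩ := mem_inf.mp hx
  rw [← SetLike.mem_coe, mul_normal] at hx
  obtain ⟨a, ha, w, hw, rfl⟩ := hx
  have hwN : w ∈ N := by simpa using N.mul_mem (N.inv_mem (hA ha)) hxN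
  exact mul_mem_sup ha ⟨hwN, hw⟩

end

theorem stmt12 {G : Type*} [Group G] [Finite G] (N : Subgroup G) [N.Normal] :
    (genFitting N).map N.subtype = N ⊓ genFitting G := by
  have := fittingSubgroup_normal (G := G)
  have := isNilpotent_fittingSubgroup (G := G)
  refine le_antisymm ?_ ?_
  · rw [genFitting, genFitting, Subgroup.map_sup]
    exact le_inf (sup_le (map_subtype_le _) (map_subtype_le _))
      (sup_le_sup (map_subtype_layer_le (Normal.isSubnormal ‹_›))
        (map_subtype_fittingSubgroup_le N))
  · set W := centralizer N ⊔ fittingSubgroup G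
    have hM : Group.IsNilpotent (N ⊓ W : Subgroup G) :=
      isNilpotent_of_le_centralizer_sup inf_le_left inf_le_right
    calc N ⊓ genFitting G ≤ N ⊓ ((layer N).map N.subtype ⊔ W) := by
          rw [genFitting, ← sup_assoc]
          exact inf_le_inf_left _ (sup_le_sup_right (layer_le_sup_centralizer ‹_›) _)
      _ ≤ (layer N).map N.subtype ⊔ (N ⊓ W) := inf_sup_le_sup_inf_of_normal (map_subtype_le _)
      _ ≤ (genFitting N).map N.subtype := by
          rw [genFitting, Subgroup.map_sup]
          exact sup_le_sup_left (le_map_subtype_fittingSubgroup inf_le_left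
            ((normal_inf_normal N W).subgroupOf N) hM) _
end
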